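/- For every integer N ≥ 1, the quantity H(N,1/2) = (1/(N·2^N)) Σ_{k=0}^{N} C(N,k) log₂ C(N,k) satisfies the recurrence H(N+1,1/2) = (N/(N+1)) H(N,1/2) + (1/((N+1)·2^{N+1})) Σ_{k=0}^{N} C(N,k) log₂( (N+1)² / ((N+1−k)(k+1)) ). -/

import Mathlib

/-!
Pascal's rule turns a sum `∑ₖ C(N+1,k) g(k)` into `∑ₖ C(N,k) (g(k) + g(k+1))`. Taking
`g = logb C(N+1, ·)`, the bracket is the logarithm of `C(N+1,k) C(N+1,k+1)`, which equals
`C(N,k)² (N+1)² / ((N+1-k)(k+1))` by the two absorption identities for binomial coefficients.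
Hence `∑ C(N+1,k) logb C(N+1,k)` is twice the corresponding sum at `N` plus the correction sum,
and the recurrence is this identity divided by `(N+1) 2^(N+1)`.
-/

open Finset

/-- `H(N,1/2) = (1/(N·2^N)) ∑_{k=0}^{N} C(N,k) log₂ C(N,k)`. -/
noncomputable def Hhalf (N : ℕ) : ℝ :=
  (1 / ((N : ℝ) * 2 ^ N)) * ∑ k ∈ Finset.range (N + 1),
    (N.choose k : ℝ) * Real.logb 2 (N.choose k)

theorem sum_range_succ_choose_mul {R : Type*} [Semiring R] (N : ℕ) (g : ℕ → R) :
    ∑ k ∈ range (N + 2), ((N + 1).choose k : R) * g k =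
      ∑ k ∈ range (N + 1), (N.choose k : R) * (g k + g (k + 1)) := by
  have hshift : ∑ k ∈ range (N + 1), (N.choose (k + 1) : R) * g (k + 1) + (N.choose 0 : R) * g 0 =
      ∑ k ∈ range (N + 1), (N.choose k : R) * g k := by
    rw [← sum_range_succ' (fun k => (N.choose k : R) * g k), sum_range_succ, Nat.choose_succ_self,
      Nat.cast_zero, zero_mul, add_zero]
  simp only [mul_add, sum_add_distrib]
  rw [← hshift, sum_range_succ']
  simp only [Nat.choose_succ_succ', Nat.cast_add, add_mul, sum_add_distrib, Nat.choose_zero_right]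
  abel

theorem Nat.choose_succ_mul_choose_succ_succ (N k : ℕ) :
    (N + 1).choose k * (N + 1).choose (k + 1) * ((N + 1 - k) * (k + 1)) =
      (N.choose k * (N + 1)) ^ 2 := by
  have h₁ := Nat.choose_mul_succ_eq N k
  have h₂ := Nat.add_one_mul_choose_eq N k
  calc (N + 1).choose k * (N + 1).choose (k + 1) * ((N + 1 - k) * (k + 1))
      = ((N + 1).choose k * (N + 1 - k)) * ((N + 1).choose (k + 1) * (k + 1)) := by ring
    _ = (N.choose k * (N + 1)) ^ 2 := by rw [← h₁, ← h₂]; ring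

theorem logb_choose_succ_add_logb_choose_succ_succ (b : ℝ) {N k : ℕ} (hk : k ≤ N) :
    Real.logb b ((N + 1).choose k) + Real.logb b ((N + 1).choose (k + 1)) =
      2 * Real.logb b (N.choose k) +
        Real.logb b (((N : ℝ) + 1) ^ 2 / (((N : ℝ) + 1 - k) * (k + 1))) := by
  have hchoose_ne_zero : ∀ {n j : ℕ}, j ≤ n → (n.choose j : ℝ) ≠ 0 := fun h =>
    Nat.cast_ne_zero.mpr (Nat.choose_pos h).ne'
  have hgap : ((N : ℝ) + 1 - k) * (k + 1) ≠ 0 := by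
    have : (k : ℝ) ≤ N := by exact_mod_cast hk
    exact mul_ne_zero (by linarith) (by positivity)
  have hprod : ((N + 1).choose k : ℝ) * (N + 1).choose (k + 1) =
      (N.choose k : ℝ) ^ 2 * (((N : ℝ) + 1) ^ 2 / (((N : ℝ) + 1 - k) * (k + 1))) := by
    rw [mul_div_assoc', eq_div_iff hgap, ← mul_pow]
    have h := congrArg (Nat.cast : ℕ → ℝ) (Nat.choose_succ_mul_choose_succ_succ N k)
    push_cast [Nat.cast_sub (show k ≤ N + 1 by omega)] at h
    exact h
  rw [← Real.logb_mul (hchoose_ne_zero (by omega)) (hchoose_ne_zero (by omega)), hprod,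
    Real.logb_mul (pow_ne_zero _ (hchoose_ne_zero hk)) (div_ne_zero (by positivity) hgap), Real.logb_pow]
  norm_num

theorem sum_choose_mul_logb_choose_succ (b : ℝ) (N : ℕ) :
    ∑ k ∈ range (N + 2), ((N + 1).choose k : ℝ) * Real.logb b ((N + 1).choose k) =
      2 * ∑ k ∈ range (N + 1), (N.choose k : ℝ) * Real.logb b (N.choose k) +
        ∑ k ∈ range (N + 1), (N.choose k : ℝ) *
          Real.logb b (((N : ℝ) + 1) ^ 2 / (((N : ℝ) + 1 - k) * (k + 1))) := by
  rw [sum_range_succ_choose_mul, mul_sum, ← sum_add_distrib]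
  refine sum_congr rfl fun k hk => ?_
  rw [logb_choose_succ_add_logb_choose_succ_succ b (Nat.lt_succ_iff.mp (mem_range.mp hk))]
  ring

/-- Recurrence for `H(N,1/2)`:
`H(N+1,1/2) = (N/(N+1)) H(N,1/2)
  + (1/((N+1) 2^(N+1))) ∑_{k=0}^{N} C(N,k) log₂((N+1)² / ((N+1−k)(k+1)))`. -/
theorem Hhalf_recurrence (N : ℕ) (hN : 1 ≤ N) :
    Hhalf (N + 1) = ((N : ℝ) / ((N : ℝ) + 1)) * Hhalf N +
      (1 / (((N : ℝ) + 1) * 2 ^ (N + 1))) * ∑ k ∈ Finset.range (N + 1),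
        (N.choose k : ℝ) *
          Real.logb 2 (((N : ℝ) + 1) ^ 2 / ((((N : ℝ) + 1) - (k : ℝ)) * ((k : ℝ) + 1))) := by
  have hN₀ : (N : ℝ) ≠ 0 := Nat.cast_ne_zero.mpr (by omega)
  unfold Hhalf
  rw [Nat.cast_succ, sum_choose_mul_logb_choose_succ]
  field_simp
  ring
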